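/- Let K ⊂ ℝ³ be a centrally symmetric convex body which is strongly convex with smooth boundary (K ∈ 𝒦̂). Then Θ(K) + Θ(X(π − Θ(K))K) = π. -/

import Mathlib

open MeasureTheory Real Set
open scoped RealInnerProductSpace

noncomputable section

/-- Euclidean 3-space. -/
abbrev E3 := EuclideanSpace ℝ (Fin 3)

/-- The point `(a, b, c)` of `ℝ³`. -/
def pt (a b c : ℝ) : E3 := (WithLp.equiv 2 (Fin 3 → ℝ)).symm ![a, b, c]

/-- The polar body `K° = {y : ⟪x, y⟫ ≤ 1 for all x ∈ K}`. -/
def polarBody (K : Set E3) : Set E3 := {y : E3 | ∀ x ∈ K, ⟪x, y⟫ ≤ 1}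

/-- The radial function `ρ_K(x) = max {t ≥ 0 : t • x ∈ K}`. -/
def radial (K : Set E3) (x : E3) : ℝ := sSup {t : ℝ | 0 ≤ t ∧ t • x ∈ K}

/-- The spherical parametrization `P(α, β)`. -/
def sphP (α β : ℝ) : E3 := pt (cos α) (sin α * cos β) (sin α * sin β)

/-- Rotation by angle `θ` about the `x`-axis. -/
def rotX (θ : ℝ) (p : E3) : E3 :=
  pt (p 0) (cos θ * p 1 - sin θ * p 2) (sin θ * p 1 + cos θ * p 2)

/-- Rotation by angle `φ` about the `y`-axis. -/
def rotY (φ : ℝ) (p : E3) : E3 :=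
  pt (cos φ * p 0 + sin φ * p 2) (p 1) (-sin φ * p 0 + cos φ * p 2)

/-- Rotation by angle `ψ` about the `z`-axis. -/
def rotZ (ψ : ℝ) (p : E3) : E3 :=
  pt (cos ψ * p 0 - sin ψ * p 1) (sin ψ * p 0 + cos ψ * p 1) (p 2)

/-- `K ∈ 𝒦̂`: a centrally symmetric convex body in `ℝ³` which is strongly convex with
smooth boundary, i.e. `h_K = gauge²/2` is `C^∞` away from the origin and has positive
definite Hessian at every point of the unit sphere. -/
def IsKhat (K : Set E3) : Prop :=
  IsCompact K ∧ Convex ℝ K ∧ (interior K).Nonempty ∧ K = -K ∧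
    ContDiffOn ℝ (⊤ : ℕ∞) (fun x => gauge K x ^ 2 / 2) {0}ᶜ ∧
    ∀ x : E3, ‖x‖ = 1 → ∀ v : E3, v ≠ 0 →
      0 < fderiv ℝ (fderiv ℝ (fun y => gauge K y ^ 2 / 2)) x v v

/-- `Θ` satisfies the defining property of `Θ(K)`. -/
def ThetaEq (K : Set E3) (Θ : ℝ) : Prop :=
  Θ ∈ Ioo 0 π ∧
    ∫ β in (0:ℝ)..Θ, ∫ α in (0:ℝ)..π, radial K (sphP α β) ^ 3 * sin α
      = ∫ β in Θ..π, ∫ α in (0:ℝ)..π, radial K (sphP α β) ^ 3 * sin α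

/-- `Φ` satisfies the defining property of `Φ(K)`. -/
def PhiEq (K : Set E3) (Φ : ℝ) : Prop :=
  Φ ∈ Ioo 0 π ∧
    ∫ α in (0:ℝ)..Φ, radial K (sphP α 0) ^ 2 = ∫ α in Φ..π, radial K (sphP α 0) ^ 2

/-- `Ψ` satisfies the defining property of `Ψ(K)`, where `Θ = Θ(K)`. -/
def PsiEq (K : Set E3) (Θ Ψ : ℝ) : Prop :=
  Ψ ∈ Ioo 0 π ∧
    ∫ α in (0:ℝ)..Ψ, radial K (sphP α Θ) ^ 2 = ∫ α in Ψ..π, radial K (sphP α Θ) ^ 2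

/-- The unitriangular map whose inverse is the matrix `𝒜(K)` (for `Θ = Θ(K)`, `Φ = Φ(K)`,
`Ψ = Ψ(K)`); thus the body `𝒜(K) K` is the preimage `shear Θ Φ Ψ ⁻¹' K`. -/
def shear (Θ Φ Ψ : ℝ) (p : E3) : E3 :=
  pt (p 0 + p 1 / tan Φ + p 2 / (sin Θ * tan Ψ)) (p 1 + p 2 / tan Θ) (p 2)

/-- `v₁ = vol(L ∩ {x ≥ 0, y ≥ 0, z ≥ 0})`. -/
def vol₁ (L : Set E3) : ℝ := (volume (L ∩ {p : E3 | 0 ≤ p 0 ∧ 0 ≤ p 1 ∧ 0 ≤ p 2})).toReal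

/-- `v₂ = vol(L ∩ {x ≤ 0, y ≥ 0, z ≥ 0})`. -/
def vol₂ (L : Set E3) : ℝ := (volume (L ∩ {p : E3 | p 0 ≤ 0 ∧ 0 ≤ p 1 ∧ 0 ≤ p 2})).toReal

/-- `v₃ = vol(L ∩ {x ≤ 0, y ≤ 0, z ≥ 0})`. -/
def vol₃ (L : Set E3) : ℝ := (volume (L ∩ {p : E3 | p 0 ≤ 0 ∧ p 1 ≤ 0 ∧ 0 ≤ p 2})).toReal

/-- `v₄ = vol(L ∩ {x ≥ 0, y ≤ 0, z ≥ 0})`. -/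
def vol₄ (L : Set E3) : ℝ := (volume (L ∩ {p : E3 | 0 ≤ p 0 ∧ p 1 ≤ 0 ∧ 0 ≤ p 2})).toReal

/-- `F` applied to the transformed body `L' = 𝒜(K) K`. -/
def Ffun (L : Set E3) : ℝ :=
  (μH[2] (L ∩ {p : E3 | p 0 = 0 ∧ 0 ≤ p 1 ∧ 0 ≤ p 2})).toReal -
    (μH[2] (L ∩ {p : E3 | p 0 = 0 ∧ p 1 ≤ 0 ∧ 0 ≤ p 2})).toReal

/-- `G = v₁ + v₃ - v₂ - v₄` applied to the transformed body `L' = 𝒜(K) K`. -/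
def Gfun (L : Set E3) : ℝ := vol₁ L + vol₃ L - vol₂ L - vol₄ L

/-- `H = v₁ + v₄ - v₂ - v₃` applied to the transformed body `L' = 𝒜(K) K`. -/
def Hfun (L : Set E3) : ℝ := vol₁ L + vol₄ L - vol₂ L - vol₃ L

/-- Condition (★). -/
def StarCond (K : Set E3) : Prop :=
  volume (K ∩ {p : E3 | 0 ≤ p 0 ∧ 0 ≤ p 1 ∧ 0 ≤ p 2})
      = volume (K ∩ {p : E3 | p 0 ≤ 0 ∧ 0 ≤ p 1 ∧ 0 ≤ p 2}) ∧
    volume (K ∩ {p : E3 | p 0 ≤ 0 ∧ 0 ≤ p 1 ∧ 0 ≤ p 2})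
      = volume (K ∩ {p : E3 | p 0 ≤ 0 ∧ p 1 ≤ 0 ∧ 0 ≤ p 2}) ∧
    volume (K ∩ {p : E3 | p 0 ≤ 0 ∧ p 1 ≤ 0 ∧ 0 ≤ p 2})
      = volume (K ∩ {p : E3 | 0 ≤ p 0 ∧ p 1 ≤ 0 ∧ 0 ≤ p 2}) ∧
    μH[2] (K ∩ {p : E3 | p 0 = 0 ∧ 0 ≤ p 1 ∧ 0 ≤ p 2})
      = μH[2] (K ∩ {p : E3 | p 0 = 0 ∧ p 1 ≤ 0 ∧ 0 ≤ p 2}) ∧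
    μH[2] (K ∩ {p : E3 | p 1 = 0 ∧ 0 ≤ p 0 ∧ 0 ≤ p 2})
      = μH[2] (K ∩ {p : E3 | p 1 = 0 ∧ 0 ≤ p 0 ∧ p 2 ≤ 0}) ∧
    μH[2] (K ∩ {p : E3 | p 2 = 0 ∧ 0 ≤ p 0 ∧ 0 ≤ p 1})
      = μH[2] (K ∩ {p : E3 | p 2 = 0 ∧ p 0 ≤ 0 ∧ 0 ≤ p 1})

/-- The cube `[-1,1]³`. -/
def cube : Set E3 := {x : E3 | ∀ i, x i ∈ Icc (-1:ℝ) 1}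

/-- The cross product on `ℝ³`. -/
def cross (a b : E3) : E3 :=
  pt (a 1 * b 2 - a 2 * b 1) (a 2 * b 0 - a 0 * b 2) (a 0 * b 1 - a 1 * b 0)

open Topology

/-!
Write `F(β) = ∫₀^π ρ_K(P(α, β))³ sin α dα`, so that `Θ = Θ(K)` is defined by
`∫₀^Θ F = ∫_Θ^π F = ½ ∫₀^π F`. Rotating `K` about the `x`-axis by `π − Θ` shifts `F` by `π − Θ`,
and central symmetry makes `F` `π`-periodic; hence `Θ' = Θ(X(π − Θ)K)` is defined by
`∫_Θ^{Θ+Θ'} F = ½ ∫_Θ^{Θ+π} F = ½ ∫₀^π F = ∫_Θ^π F`. Since `F > 0`, this forces `Θ + Θ' = π`.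
-/
theorem Convex.zero_mem_interior_of_neg_eq {E : Type*} [AddCommGroup E] [Module ℝ E]
    [TopologicalSpace E] [IsTopologicalAddGroup E] [ContinuousConstSMul ℝ E] {s : Set E}
    (hs : Convex ℝ s) (hsymm : s = -s) (hint : (interior s).Nonempty) :
    (0 : E) ∈ interior s := by
  obtain ⟨x, hx⟩ := hint
  have hnegx : -x ∈ interior s := by
    rw [hsymm, show -s = Homeomorph.neg E ⁻¹' s from rfl, ← Homeomorph.preimage_interior]
    simpa using hx
  simpa using hs.interior hx hnegx (by norm_num : (0 : ℝ) ≤ 1 / 2)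
    (by norm_num : (0 : ℝ) ≤ 1 / 2) (by norm_num)

theorem Function.Periodic.add_eq_of_intervalIntegral_bisect {F : ℝ → ℝ} {T a b : ℝ}
    (hper : Function.Periodic F T) (hF : ∀ x y, IntervalIntegrable F volume x y)
    (hpos : ∀ x, 0 < F x) (ha : ∫ x in 0..a, F x = ∫ x in a..T, F x)
    (hb : ∫ x in 0..b, F (x + a) = ∫ x in b..T, F (x + a)) :
    a + b = T := by
  set G : ℝ → ℝ := fun y => ∫ x in 0..y, F x
  have hG : ∀ x y, ∫ t in x..y, F t = G y - G x := fun x y =>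
    (intervalIntegral.integral_interval_sub_left (hF 0 y) (hF 0 x)).symm
  have hG0 : G 0 = 0 := intervalIntegral.integral_same
  have hGmono : StrictMono G := fun x y hxy => by
    have := intervalIntegral.intervalIntegral_pos_of_pos_on (hF x y) (fun t _ => hpos t) hxy
    linarith [hG x y]
  have hperiod : G (a + T) = G a + G T := by
    simpa [G] using hper.intervalIntegral_add_eq_add 0 a hF
  simp only [intervalIntegral.integral_comp_add_right, zero_add] at hb
  rw [hG, hG] at ha hb
  rw [add_comm T, hperiod, add_comm b] at hb
  exact hGmono.injective (by linarith)

lemma E3_ext {x y : E3} (h0 : x 0 = y 0) (h1 : x 1 = y 1) (h2 : x 2 = y 2) : x = y := by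
  ext i; fin_cases i <;> assumption

lemma sphP_ne_zero (α β : ℝ) : sphP α β ≠ 0 := by
  intro h
  have e0 : cos α = 0 := congrArg (· 0) h
  have e1 : sin α * cos β = 0 := congrArg (· 1) h
  have e2 : sin α * sin β = 0 := congrArg (· 2) h
  nlinarith [sin_sq_add_cos_sq α, sin_sq_add_cos_sq β]

lemma sphP_add_pi (α β : ℝ) : sphP α (β + π) = -sphP (π - α) β := by
  apply E3_ext
  · show cos α = -cos (π - α)
    rw [cos_pi_sub, neg_neg]
  · show sin α * cos (β + π) = -(sin (π - α) * cos β)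
    rw [cos_add_pi, sin_pi_sub]; ring
  · show sin α * sin (β + π) = -(sin (π - α) * sin β)
    rw [sin_add_pi, sin_pi_sub]; ring

lemma continuous_sphP : Continuous fun p : ℝ × ℝ => sphP p.1 p.2 := by
  refine (PiLp.continuous_toLp 2 _).comp (continuous_pi fun i => ?_)
  fin_cases i <;> simp <;> fun_prop

lemma rotX_neg_rotX (θ : ℝ) (p : E3) : rotX (-θ) (rotX θ p) = p := by
  apply E3_ext
  · rfl
  · show cos (-θ) * (cos θ * p 1 - sin θ * p 2) - sin (-θ) * (sin θ * p 1 + cos θ * p 2) = p 1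
    rw [cos_neg, sin_neg]
    linear_combination p 1 * sin_sq_add_cos_sq θ
  · show sin (-θ) * (cos θ * p 1 - sin θ * p 2) + cos (-θ) * (sin θ * p 1 + cos θ * p 2) = p 2
    rw [cos_neg, sin_neg]
    linear_combination p 2 * sin_sq_add_cos_sq θ

lemma rotX_smul (θ t : ℝ) (p : E3) : rotX θ (t • p) = t • rotX θ p := by
  apply E3_ext
  · rfl
  · show cos θ * (t * p 1) - sin θ * (t * p 2) = t * (cos θ * p 1 - sin θ * p 2)
    ring
  · show sin θ * (t * p 1) + cos θ * (t * p 2) = t * (sin θ * p 1 + cos θ * p 2)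
    ring

lemma rotX_neg_sphP (θ α β : ℝ) : rotX (-θ) (sphP α β) = sphP α (β - θ) := by
  apply E3_ext
  · rfl
  · show cos (-θ) * (sin α * cos β) - sin (-θ) * (sin α * sin β) = sin α * cos (β - θ)
    rw [cos_neg, sin_neg, cos_sub]; ring
  · show sin (-θ) * (sin α * cos β) + cos (-θ) * (sin α * sin β) = sin α * sin (β - θ)
    rw [cos_neg, sin_neg, sin_sub]; ring

lemma image_rotX (θ : ℝ) (K : Set E3) : rotX θ '' K = rotX (-θ) ⁻¹' K := by
  have hinv : Function.RightInverse (rotX (-θ)) (rotX θ) := fun p => by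
    simpa using rotX_neg_rotX (-θ) p
  rw [image_eq_preimage_of_inverse (rotX_neg_rotX θ) hinv]

section radial

variable {K : Set E3}

lemma radial_preimage {g : E3 → E3} (hg : ∀ (t : ℝ) x, g (t • x) = t • g x) (y : E3) :
    radial (g ⁻¹' K) y = radial K (g y) := by
  simp only [radial, mem_preimage, hg]

lemma radial_neg (hsymm : K = -K) (x : E3) : radial K (-x) = radial K x := by
  conv_rhs => rw [hsymm]
  exact (radial_preimage (g := Neg.neg) (fun t x => (smul_neg t x).symm) x).symm

lemma radial_rotX_image (θ : ℝ) (α β : ℝ) :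
    radial (rotX θ '' K) (sphP α β) = radial K (sphP α (β - θ)) := by
  rw [image_rotX, radial_preimage (rotX_smul _), rotX_neg_sphP]

variable (hKc : IsCompact K) (hK0 : K ∈ 𝓝 (0 : E3))
include hKc hK0

lemma gauge_pos_of_ne_zero {x : E3} (hx : x ≠ 0) : 0 < gauge K x :=
  (gauge_pos (absorbent_nhds_zero hK0)
    (NormedSpace.isVonNBounded_of_isBounded _ hKc.isBounded)).2 hx

variable (hKconv : Convex ℝ K)
include hKconv

lemma radial_eq_inv_gauge {x : E3} (hx : x ≠ 0) : radial K x = (gauge K x)⁻¹ := by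
  have hg := gauge_pos_of_ne_zero hKc hK0 hx
  refine IsGreatest.csSup_eq ⟨⟨inv_nonneg.2 hg.le, ?_⟩, fun t ⟨ht0, htK⟩ => ?_⟩
  · refine hKc.isClosed.closure_subset ((gauge_le_one_iff_mem_closure hKconv hK0).1 ?_)
    rw [gauge_smul_of_nonneg (inv_nonneg.2 hg.le), smul_eq_mul, inv_mul_cancel₀ hg.ne']
  · have := gauge_le_one_of_mem htK
    rw [gauge_smul_of_nonneg ht0, smul_eq_mul] at this
    rwa [inv_eq_one_div, le_div_iff₀ hg]

lemma radial_pos {x : E3} (hx : x ≠ 0) : 0 < radial K x := by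
  rw [radial_eq_inv_gauge hKc hK0 hKconv hx]
  exact inv_pos.2 (gauge_pos_of_ne_zero hKc hK0 hx)

lemma continuousOn_radial : ContinuousOn (radial K) {0}ᶜ :=
  ((continuous_gauge hKconv hK0).continuousOn.inv₀ fun _ hx =>
    (gauge_pos_of_ne_zero hKc hK0 hx).ne').congr fun _ hx => radial_eq_inv_gauge hKc hK0 hKconv hx

end radial

/-- The function `F` of the proof: `F / 3` is the rate at which the volume of `K` in the wedge
`{r P(α, β') : r ≥ 0, 0 ≤ β' ≤ β}` grows with `β`. -/
def thetaDensity (K : Set E3) (β : ℝ) : ℝ :=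
  ∫ α in (0 : ℝ)..π, radial K (sphP α β) ^ 3 * sin α

lemma thetaDensity_rotX_image (K : Set E3) (θ β : ℝ) :
    thetaDensity (rotX θ '' K) β = thetaDensity K (β - θ) := by
  simp only [thetaDensity, radial_rotX_image]

lemma thetaDensity_periodic {K : Set E3} (hsymm : K = -K) :
    Function.Periodic (thetaDensity K) π := fun β => by
  simp only [thetaDensity, sphP_add_pi, radial_neg hsymm]
  simpa using intervalIntegral.integral_comp_sub_left (a := 0) (b := π)
    (fun α => radial K (sphP α β) ^ 3 * sin α) π

section convexBody

variable {K : Set E3} (hKc : IsCompact K) (hK0 : K ∈ 𝓝 (0 : E3)) (hKconv : Convex ℝ K)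
include hKc hK0 hKconv

lemma continuous_radial_sphP : Continuous fun p : ℝ × ℝ => radial K (sphP p.1 p.2) :=
  (continuousOn_radial hKc hK0 hKconv).comp_continuous continuous_sphP
    fun p => sphP_ne_zero p.1 p.2

lemma continuous_thetaDensity : Continuous (thetaDensity K) :=
  intervalIntegral.continuous_parametric_intervalIntegral_of_continuous'
    (((continuous_radial_sphP hKc hK0 hKconv).comp continuous_swap).pow 3 |>.mul
      (continuous_sin.comp continuous_snd)) 0 π

lemma thetaDensity_pos (β : ℝ) : 0 < thetaDensity K β := by
  refine intervalIntegral.intervalIntegral_pos_of_pos_on ?_ (fun α hα => ?_) pi_pos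
  · exact ((((continuous_radial_sphP hKc hK0 hKconv).comp (continuous_id.prodMk
      continuous_const)).pow 3).mul continuous_sin).intervalIntegrable _ _
  · exact mul_pos (pow_pos (radial_pos hKc hK0 hKconv (sphP_ne_zero α β)) 3)
      (sin_pos_of_pos_of_lt_pi hα.1 hα.2)

end convexBody

/-- Lemma 5.4: `Θ(K) + Θ(X(π − Θ(K))K) = π` for every `K ∈ 𝒦̂`. -/
theorem theta_rotX_identity (K : Set E3) (hK : IsKhat K)
    (Θ Θ' : ℝ) (hΘ : ThetaEq K Θ) (hΘ' : ThetaEq (rotX (π - Θ) '' K) Θ') :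
    Θ + Θ' = π := by
  obtain ⟨hKc, hKconv, hint, hsymm, -, -⟩ := hK
  have hK0 : K ∈ 𝓝 (0 : E3) :=
    mem_interior_iff_mem_nhds.1 (hKconv.zero_mem_interior_of_neg_eq hsymm hint)
  have hper := thetaDensity_periodic hsymm
  have hshift : ∀ β, thetaDensity (rotX (π - Θ) '' K) β = thetaDensity K (β + Θ) := fun β => by
    rw [thetaDensity_rotX_image, ← hper]
    congr 1
    ring
  have hΘ'shift : ∫ β in 0..Θ', thetaDensity K (β + Θ) = ∫ β in Θ'..π, thetaDensity K (β + Θ) := by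
    simp only [← hshift]
    exact hΘ'.2
  exact hper.add_eq_of_intervalIntegral_bisect
    (fun x y => (continuous_thetaDensity hKc hK0 hKconv).intervalIntegrable x y)
    (thetaDensity_pos hKc hK0 hKconv) hΘ.2 hΘ'shift
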